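/- Let ρ̲ > 0, 0 < η̲ ≤ η̄ < ∞, and for each i let η_i ∈ [η̲, η̄] and ρ_i ≥ ρ̲. Let σ_i² = η_i²(1 - 2ρ_iφ(ρ_i)/(2Φ(ρ_i)-1)) denote the variance of SDTN(0, η_i², ρ_i), set s_n² = Σ_{i=1}^n σ_i², and let v² = η̲²(1 - 2ρ̲φ(ρ̲)/(2Φ(ρ̲)-1)). Then σ_i² ≥ v² > 0 for all i, s_n² ≥ n v², and the Lindeberg condition holds: for every ε > 0, (1/s_n²) Σ_{i=1}^n ∫_{{y : |y| ≥ ε s_n}} y² · f_{0,η_i,ρ_i}(y) dy → 0 as n → ∞. -/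

import Mathlib

open MeasureTheory Real Set Filter

/-- The standard normal density `φ(x) = (2π)^(-1/2) exp(-x²/2)`. -/
noncomputable def stdNormalPDF (x : ℝ) : ℝ :=
  (Real.sqrt (2 * Real.pi))⁻¹ * Real.exp (-x ^ 2 / 2)

/-- The standard normal CDF `Φ(x) = ∫_{-∞}^x φ(t) dt`. -/
noncomputable def stdNormalCDF (x : ℝ) : ℝ :=
  ∫ t in Set.Iic x, stdNormalPDF t

/-- The symmetric doubly truncated normal (SDTN) density with location `μ`, scale `η`
and truncation parameter `ρ`. -/
noncomputable def sdtnPDF (μ η ρ : ℝ) (x : ℝ) : ℝ :=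
  if x ∈ Set.Icc (μ - ρ * η) (μ + ρ * η) then
    stdNormalPDF ((x - μ) / η) / (η * (2 * stdNormalCDF ρ - 1))
  else 0

/-!
With `T` standard normal, integration by parts gives
`1 - 2ρφ(ρ)/(2Φ(ρ)-1) = E[T² | |T| ≤ ρ]`, which is positive and nondecreasing in `ρ`
(widening the window only adds mass where `T²` exceeds the old bound `ρ²`). Hence `σ_i² ≥ v² > 0` and
`s_n² ≥ n v²`. For the Lindeberg condition, every `y² f_{0,η_i,ρ_i}(y)` is dominated by the
single integrable function `y² φ(y/η̄) / (η̲ (2Φ(ρ̲)-1))`, so the Lindeberg sum is at most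
`1/v²` times the integral of that function over `{|y| ≥ ε s_n}`; as `s_n → ∞` this tends to `0`
by dominated convergence.
-/

open ProbabilityTheory Finset

lemma stdNormalPDF_eq_gaussianPDFReal : stdNormalPDF = gaussianPDFReal 0 1 := by
  ext x
  simp [stdNormalPDF, gaussianPDFReal]

lemma stdNormalPDF_pos (x : ℝ) : 0 < stdNormalPDF x := by
  unfold stdNormalPDF
  positivity

lemma stdNormalPDF_neg (x : ℝ) : stdNormalPDF (-x) = stdNormalPDF x := by
  simp [stdNormalPDF]

lemma stdNormalPDF_le_of_abs_le {u v : ℝ} (h : |u| ≤ |v|) : stdNormalPDF v ≤ stdNormalPDF u := by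
  have := sq_le_sq.2 h
  unfold stdNormalPDF
  gcongr

lemma continuous_stdNormalPDF : Continuous stdNormalPDF := by
  unfold stdNormalPDF
  fun_prop

lemma integrable_stdNormalPDF : Integrable stdNormalPDF := by
  simpa [stdNormalPDF_eq_gaussianPDFReal] using integrable_gaussianPDFReal 0 1

lemma integral_stdNormalPDF : ∫ x, stdNormalPDF x = 1 := by
  simpa [stdNormalPDF_eq_gaussianPDFReal] using integral_gaussianPDFReal_eq_one 0 one_ne_zero

lemma hasDerivAt_stdNormalPDF (x : ℝ) : HasDerivAt stdNormalPDF (-x * stdNormalPDF x) x := by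
  have h : HasDerivAt (fun t : ℝ => -t ^ 2 / 2) (-x) x :=
    ((hasDerivAt_pow 2 x).neg.div_const 2).congr_deriv (by push_cast; ring)
  exact (h.exp.const_mul (√(2 * π))⁻¹).congr_deriv (by simp only [stdNormalPDF]; ring)

lemma integrable_sq_mul_stdNormalPDF_div {c : ℝ} (hc : c ≠ 0) :
    Integrable fun y => y ^ 2 * stdNormalPDF (y / c) := by
  have hb : (0 : ℝ) < 1 / (2 * c ^ 2) := by positivity
  have h := (integrable_rpow_mul_exp_neg_mul_sq hb (by norm_num : (-1 : ℝ) < 2)).const_mul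
    (√(2 * π))⁻¹
  refine h.congr (Eventually.of_forall fun y => ?_)
  simp only [stdNormalPDF]
  rw [show -(y / c) ^ 2 / 2 = -(1 / (2 * c ^ 2)) * y ^ 2 by field_simp]
  norm_num [Real.rpow_natCast]
  ring

lemma stdNormalCDF_mono : Monotone stdNormalCDF := fun _ _ hab =>
  setIntegral_mono_set integrable_stdNormalPDF.integrableOn
    (Eventually.of_forall fun x => (stdNormalPDF_pos x).le) (Set.Iic_subset_Iic.2 hab).eventuallyLE

lemma stdNormalCDF_neg (x : ℝ) : stdNormalCDF (-x) = 1 - stdNormalCDF x := by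
  have hneg : stdNormalCDF (-x) = ∫ t in Ioi x, stdNormalPDF t := by
    rw [stdNormalCDF]
    simpa [stdNormalPDF_neg] using integral_comp_neg_Iic (-x) stdNormalPDF
  have hsplit := integral_add_compl (measurableSet_Iic (a := x)) integrable_stdNormalPDF
  rw [compl_Iic, integral_stdNormalPDF] at hsplit
  rw [hneg, stdNormalCDF]
  linarith

lemma integral_Icc_stdNormalPDF {x : ℝ} (hx : 0 ≤ x) :
    ∫ t in Icc (-x) x, stdNormalPDF t = 2 * stdNormalCDF x - 1 := by
  rw [integral_Icc_eq_integral_Ioc, ← intervalIntegral.integral_of_le (by linarith),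
    ← intervalIntegral.integral_Iic_sub_Iic integrable_stdNormalPDF.integrableOn
      integrable_stdNormalPDF.integrableOn]
  change stdNormalCDF x - stdNormalCDF (-x) = _
  rw [stdNormalCDF_neg]
  ring

/-- Integration by parts, using `(-t φ(t))' = (t² - 1) φ(t)`. -/
lemma integral_Icc_sq_mul_stdNormalPDF {x : ℝ} (hx : 0 ≤ x) :
    ∫ t in Icc (-x) x, t ^ 2 * stdNormalPDF t
      = 2 * stdNormalCDF x - 1 - 2 * x * stdNormalPDF x := by
  have hderiv : ∀ t, HasDerivAt (fun t => -t * stdNormalPDF t) ((t ^ 2 - 1) * stdNormalPDF t) t :=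
    fun t => ((hasDerivAt_neg' t).mul (hasDerivAt_stdNormalPDF t)).congr_deriv (by ring)
  have hcont : Continuous fun t => (t ^ 2 - 1) * stdNormalPDF t := by
    have := continuous_stdNormalPDF
    fun_prop
  have hFTC := intervalIntegral.integral_eq_sub_of_hasDerivAt (fun t _ => hderiv t)
    (hcont.intervalIntegrable (-x) x)
  have hsplit : ∫ t in (-x)..x, t ^ 2 * stdNormalPDF t
      = (∫ t in (-x)..x, (t ^ 2 - 1) * stdNormalPDF t) + ∫ t in (-x)..x, stdNormalPDF t := by
    rw [← intervalIntegral.integral_add (hcont.intervalIntegrable _ _)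
      (continuous_stdNormalPDF.intervalIntegrable _ _)]
    ring_nf
  rw [← integral_Icc_stdNormalPDF hx, integral_Icc_eq_integral_Ioc, integral_Icc_eq_integral_Ioc,
    ← intervalIntegral.integral_of_le (by linarith), ← intervalIntegral.integral_of_le (by linarith),
    hsplit, hFTC, stdNormalPDF_neg]
  ring

/-- Monotonicity in `x` of the truncated second moment `∫_{[-x,x]} t² f / ∫_{[-x,x]} f`, in
cross-multiplied form. -/
theorem integral_Icc_sq_mul_mul_integral_Icc_le {μ : Measure ℝ} {f : ℝ → ℝ} {a b : ℝ}
    (hf : ∀ t, 0 ≤ f t) (hfi : IntegrableOn f (Icc (-b) b) μ)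
    (hf2 : IntegrableOn (fun t => t ^ 2 * f t) (Icc (-b) b) μ) (ha : 0 ≤ a) (hab : a ≤ b) :
    (∫ t in Icc (-a) a, t ^ 2 * f t ∂μ) * ∫ t in Icc (-b) b, f t ∂μ
      ≤ (∫ t in Icc (-b) b, t ^ 2 * f t ∂μ) * ∫ t in Icc (-a) a, f t ∂μ := by
  have hAB : Icc (-a) a ⊆ Icc (-b) b := Icc_subset_Icc (by linarith) hab
  have hI := setIntegral_sdiff measurableSet_Icc hf2 hAB
  have hN := setIntegral_sdiff measurableSet_Icc hfi hAB
  have hNA : 0 ≤ ∫ t in Icc (-a) a, f t ∂μ := setIntegral_nonneg measurableSet_Icc fun t _ => hf t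
  have hND : 0 ≤ ∫ t in Icc (-b) b \ Icc (-a) a, f t ∂μ :=
    setIntegral_nonneg (measurableSet_Icc.diff measurableSet_Icc) fun t _ => hf t
  have hIA : ∫ t in Icc (-a) a, t ^ 2 * f t ∂μ ≤ a ^ 2 * ∫ t in Icc (-a) a, f t ∂μ := by
    rw [← integral_const_mul]
    refine setIntegral_mono_on (hf2.mono_set hAB) ((hfi.mono_set hAB).const_mul _)
      measurableSet_Icc fun t ht => ?_
    exact mul_le_mul_of_nonneg_right (sq_le_sq' ht.1 ht.2) (hf t)
  have hID : a ^ 2 * ∫ t in Icc (-b) b \ Icc (-a) a, f t ∂μ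
      ≤ ∫ t in Icc (-b) b \ Icc (-a) a, t ^ 2 * f t ∂μ := by
    rw [← integral_const_mul]
    refine setIntegral_mono_on ((hfi.mono_set sdiff_subset).const_mul _)
      (hf2.mono_set sdiff_subset) (measurableSet_Icc.diff measurableSet_Icc) fun t ht => ?_
    have : a ≤ |t| := by
      by_contra h
      exact ht.2 ⟨by linarith [neg_abs_le t], by linarith [le_abs_self t]⟩
    exact mul_le_mul_of_nonneg_right (by nlinarith [sq_abs t]) (hf t)
  rw [hI] at hID
  rw [hN] at hID hND
  nlinarith

lemma two_mul_stdNormalCDF_sub_one_pos {x : ℝ} (hx : 0 < x) : 0 < 2 * stdNormalCDF x - 1 := by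
  rw [← integral_Icc_stdNormalPDF hx.le, integral_Icc_eq_integral_Ioc,
    ← intervalIntegral.integral_of_le (by linarith)]
  exact intervalIntegral.integral_pos (by linarith) continuous_stdNormalPDF.continuousOn
    (fun t _ => (stdNormalPDF_pos t).le) ⟨x, ⟨by linarith, le_rfl⟩, stdNormalPDF_pos x⟩

lemma integral_Icc_sq_mul_stdNormalPDF_pos {x : ℝ} (hx : 0 < x) :
    0 < ∫ t in Icc (-x) x, t ^ 2 * stdNormalPDF t := by
  rw [integral_Icc_eq_integral_Ioc, ← intervalIntegral.integral_of_le (by linarith)]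
  exact intervalIntegral.integral_pos (by linarith)
    (continuous_pow 2 |>.mul continuous_stdNormalPDF).continuousOn
    (fun t _ => mul_nonneg (sq_nonneg t) (stdNormalPDF_pos t).le)
    ⟨x, ⟨by linarith, le_rfl⟩, mul_pos (pow_pos hx 2) (stdNormalPDF_pos x)⟩

noncomputable def sdtnUnitVariance (ρ : ℝ) : ℝ :=
  1 - 2 * ρ * stdNormalPDF ρ / (2 * stdNormalCDF ρ - 1)

lemma sdtnUnitVariance_eq_div {ρ : ℝ} (hρ : 0 < ρ) :
    sdtnUnitVariance ρ
      = (∫ t in Icc (-ρ) ρ, t ^ 2 * stdNormalPDF t) / ∫ t in Icc (-ρ) ρ, stdNormalPDF t := by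
  have hN := two_mul_stdNormalCDF_sub_one_pos hρ
  rw [integral_Icc_sq_mul_stdNormalPDF hρ.le, integral_Icc_stdNormalPDF hρ.le, sdtnUnitVariance]
  field_simp

lemma sdtnUnitVariance_pos {ρ : ℝ} (hρ : 0 < ρ) : 0 < sdtnUnitVariance ρ := by
  rw [sdtnUnitVariance_eq_div hρ, integral_Icc_stdNormalPDF hρ.le]
  exact div_pos (integral_Icc_sq_mul_stdNormalPDF_pos hρ) (two_mul_stdNormalCDF_sub_one_pos hρ)

lemma sdtnUnitVariance_monotoneOn : MonotoneOn sdtnUnitVariance (Ioi 0) := by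
  intro a ha b hb hab
  have hN : ∀ x ∈ Ioi (0 : ℝ), 0 < ∫ t in Icc (-x) x, stdNormalPDF t := fun x hx =>
    (integral_Icc_stdNormalPDF (le_of_lt hx)).symm ▸ two_mul_stdNormalCDF_sub_one_pos hx
  rw [sdtnUnitVariance_eq_div ha, sdtnUnitVariance_eq_div hb, div_le_div_iff₀ (hN a ha) (hN b hb)]
  exact integral_Icc_sq_mul_mul_integral_Icc_le (fun t => (stdNormalPDF_pos t).le)
    integrable_stdNormalPDF.integrableOn
    ((continuous_pow 2 |>.mul continuous_stdNormalPDF).integrableOn_Icc) (le_of_lt ha) hab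

lemma sdtnPDF_nonneg (μ : ℝ) {η ρ : ℝ} (hη : 0 < η) (hρ : 0 < ρ) (x : ℝ) :
    0 ≤ sdtnPDF μ η ρ x := by
  have := two_mul_stdNormalCDF_sub_one_pos hρ
  unfold sdtnPDF
  split_ifs
  · exact div_nonneg (stdNormalPDF_pos _).le (by positivity)
  · exact le_rfl

lemma sdtnPDF_le {μ ηl ηb ρl η ρ : ℝ} (hηl : 0 < ηl) (hρl : 0 < ρl) (hη : η ∈ Icc ηl ηb)
    (hρ : ρl ≤ ρ) (x : ℝ) :
    sdtnPDF μ η ρ x ≤ stdNormalPDF ((x - μ) / ηb) / (ηl * (2 * stdNormalCDF ρl - 1)) := by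
  have hη0 : 0 < η := hηl.trans_le hη.1
  have hN := two_mul_stdNormalCDF_sub_one_pos hρl
  unfold sdtnPDF
  split_ifs
  · have hpdf : stdNormalPDF ((x - μ) / η) ≤ stdNormalPDF ((x - μ) / ηb) := by
      apply stdNormalPDF_le_of_abs_le
      rw [abs_div, abs_div, abs_of_pos hη0, abs_of_pos (hη0.trans_le hη.2)]
      gcongr
      exact hη.2
    exact div_le_div₀ (stdNormalPDF_pos _).le hpdf (by positivity)
      (mul_le_mul hη.1 (by linarith [stdNormalCDF_mono hρ]) hN.le hη0.le)
  · exact div_nonneg (stdNormalPDF_pos _).le (by positivity)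

theorem tendsto_integral_tail_of_tendsto_atTop {ι E : Type*} [NormedAddCommGroup E]
    [NormedSpace ℝ E] {l : Filter ι} [l.IsCountablyGenerated] {μ : Measure ℝ} {g : ℝ → E} {R : ι → ℝ}
    (hg : Integrable g μ) (hR : Tendsto R l atTop) :
    Tendsto (fun n => ∫ y in {y | R n ≤ |y|}, g y ∂μ) l (nhds 0) := by
  have hmeas : ∀ n, MeasurableSet {y : ℝ | R n ≤ |y|} := fun n =>
    measurableSet_le measurable_const measurable_abs
  simp_rw [← integral_indicator (hmeas _)]
  rw [← integral_zero ℝ E]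
  refine tendsto_integral_filter_of_dominated_convergence (fun y => ‖g y‖)
    (Eventually.of_forall fun n => hg.aestronglyMeasurable.indicator (hmeas n))
    (Eventually.of_forall fun n => ae_of_all _ fun y => norm_indicator_le_norm_self _ _)
    hg.norm (ae_of_all _ fun y => ?_)
  exact tendsto_const_nhds.congr' <| (hR.eventually_gt_atTop |y|).mono fun n hn =>
    (indicator_of_notMem (show y ∉ {y : ℝ | R n ≤ |y|} from not_le.2 hn) g).symm

theorem tendsto_lindeberg_of_le_integrable {μ : Measure ℝ} {f : ℕ → ℝ → ℝ} {g : ℝ → ℝ}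
    (hg : Integrable g μ) (hf : ∀ i y, 0 ≤ f i y) (hfg : ∀ i y, f i y ≤ g y)
    {s : ℕ → ℝ} {v : ℝ} (hv : 0 < v) (hs : ∀ n : ℕ, n * v ≤ s n) {ε : ℝ} (hε : 0 < ε) :
    Tendsto (fun n : ℕ => (1 / s n) * ∑ i ∈ range n,
      ∫ y in {y | ε * √(s n) ≤ |y|}, f i y ∂μ) atTop (nhds 0) := by
  set S : ℕ → Set ℝ := fun n => {y | ε * √(s n) ≤ |y|}
  have hs_top : Tendsto s atTop atTop :=
    tendsto_atTop_mono hs (tendsto_natCast_atTop_atTop.atTop_mul_const hv)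
  have htail : Tendsto (fun n => ∫ y in S n, g y ∂μ) atTop (nhds 0) :=
    tendsto_integral_tail_of_tendsto_atTop hg ((tendsto_sqrt_atTop.comp hs_top).const_mul_atTop hε)
  have hterm : ∀ n i, ∫ y in S n, f i y ∂μ ≤ ∫ y in S n, g y ∂μ := fun n i =>
    integral_mono_of_nonneg (ae_of_all _ (hf i)) hg.integrableOn (ae_of_all _ (hfg i))
  have hs_nonneg : ∀ n, 0 ≤ s n := fun n => (mul_nonneg n.cast_nonneg hv.le).trans (hs n)
  have hsum_nonneg : ∀ n, 0 ≤ ∑ i ∈ range n, ∫ y in S n, f i y ∂μ := fun n =>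
    sum_nonneg fun i _ => integral_nonneg (hf i)
  refine squeeze_zero' (Eventually.of_forall fun n => ?_) ?_ (by simpa using htail.const_mul v⁻¹)
  · exact mul_nonneg (one_div_nonneg.2 (hs_nonneg n)) (hsum_nonneg n)
  filter_upwards [eventually_ge_atTop 1] with n hn
  have hnv : 0 < (n : ℝ) * v := mul_pos (by exact_mod_cast hn) hv
  calc (1 / s n) * ∑ i ∈ range n, ∫ y in S n, f i y ∂μ
      ≤ (1 / ((n : ℝ) * v)) * (n * ∫ y in S n, g y ∂μ) :=
        mul_le_mul (one_div_le_one_div_of_le hnv (hs n))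
          (by simpa using sum_le_sum (s := range n) fun i _ => hterm n i)
          (hsum_nonneg n) (by positivity)
    _ = v⁻¹ * ∫ y in S n, g y ∂μ := by
        field_simp

theorem sdtn_lindeberg (ρl ηl ηb : ℝ) (hρl : 0 < ρl) (hηl : 0 < ηl) (hle : ηl ≤ ηb)
    (η ρ : ℕ → ℝ) (hη : ∀ i, η i ∈ Set.Icc ηl ηb) (hρ : ∀ i, ρl ≤ ρ i)
    (σSq : ℕ → ℝ)
    (hσSq : ∀ i, σSq i =
      (η i) ^ 2 * (1 - 2 * ρ i * stdNormalPDF (ρ i) / (2 * stdNormalCDF (ρ i) - 1)))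
    (sSq : ℕ → ℝ) (hsSq : ∀ n, sSq n = ∑ i ∈ Finset.range n, σSq i)
    (vSq : ℝ) (hvSq : vSq = ηl ^ 2 * (1 - 2 * ρl * stdNormalPDF ρl / (2 * stdNormalCDF ρl - 1))) :
    (∀ i, vSq ≤ σSq i) ∧ 0 < vSq ∧ (∀ n : ℕ, (n : ℝ) * vSq ≤ sSq n) ∧
    ∀ ε : ℝ, 0 < ε →
      Filter.Tendsto
        (fun n : ℕ => (1 / sSq n) * ∑ i ∈ Finset.range n,
          ∫ y in {y : ℝ | ε * Real.sqrt (sSq n) ≤ |y|}, y ^ 2 * sdtnPDF 0 (η i) (ρ i) y)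
        Filter.atTop (nhds 0) := by
  have hv : 0 < vSq := hvSq ▸ mul_pos (pow_pos hηl 2) (sdtnUnitVariance_pos hρl)
  have hσ : ∀ i, vSq ≤ σSq i := fun i => by
    rw [hσSq, hvSq]
    exact mul_le_mul (pow_le_pow_left₀ hηl.le (hη i).1 2)
      (sdtnUnitVariance_monotoneOn hρl (hρl.trans_le (hρ i)) (hρ i))
      (sdtnUnitVariance_pos hρl).le (sq_nonneg _)
  have hs : ∀ n : ℕ, (n : ℝ) * vSq ≤ sSq n := fun n => by
    simpa [hsSq] using card_nsmul_le_sum (range n) σSq vSq fun i _ => hσ i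
  refine ⟨hσ, hv, hs, fun ε hε => ?_⟩
  set K := ηl * (2 * stdNormalCDF ρl - 1)
  refine tendsto_lindeberg_of_le_integrable (g := fun y => y ^ 2 * (stdNormalPDF (y / ηb) / K))
    ?_ (fun i y => ?_) (fun i y => ?_) hv hs hε
  · simpa only [mul_div_assoc] using
      (integrable_sq_mul_stdNormalPDF_div (hηl.trans_le hle).ne').div_const K
  · exact mul_nonneg (sq_nonneg y)
      (sdtnPDF_nonneg 0 (hηl.trans_le (hη i).1) (hρl.trans_le (hρ i)) y)
  · simpa using mul_le_mul_of_nonneg_left (sdtnPDF_le (μ := 0) hηl hρl (hη i) (hρ i) y)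
      (sq_nonneg y)
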